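/- Let a PRAM mechanism act on multi-attribute tables with attribute set 𝒜, where each attribute a ∈ 𝒜 is randomized independently with strictly positive row-stochastic transition matrix A_a on V_a × V'_a. Then the mechanism gives ε-differential privacy with ε = Σ_{a ∈ 𝒜} ln max_{u,v ∈ V_a, v' ∈ V'_a} (A_a)_{u,v'}/(A_a)_{v,v'}. -/

import Mathlib

/-!
Fix an output table and a permutation of the records. Its probability is a product over records
and attributes of transition probabilities, and the two neighbouring tables contribute the same
factors except at the one record where they differ. There, attribute by attribute,
`(A a) u v' ≤ M a * (A a) v v'` with `M a` the largest likelihood ratio of `A a`, so the product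
for the first table is at most `∏ a, M a ≤ exp ε` times the one for the second. Averaging over
the uniformly random permutation preserves this bound.
-/

open Finset

noncomputable def maxLikelihoodRatio {V V' : Type*} (A : V → V' → ℝ) : ℝ :=
  ⨆ u, ⨆ v, ⨆ v', A u v' / A v v'

theorem le_ciSup₃_of_finite {L α β γ : Type*} [ConditionallyCompleteLattice L]
    [Finite α] [Finite β] [Finite γ] (f : α → β → γ → L) (a : α) (b : β) (c : γ) :
    f a b c ≤ ⨆ a, ⨆ b, ⨆ c, f a b c :=
  (le_ciSup (Set.finite_range (f a b)).bddAbove c).trans <|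
    (le_ciSup (Set.finite_range fun b => ⨆ c, f a b c).bddAbove b).trans <|
      le_ciSup (Set.finite_range fun a => ⨆ b, ⨆ c, f a b c).bddAbove a

section maxLikelihoodRatio

variable {V V' : Type*} {A : V → V' → ℝ}

theorem maxLikelihoodRatio_nonneg (hA : ∀ u v', 0 ≤ A u v') : 0 ≤ maxLikelihoodRatio A :=
  Real.iSup_nonneg fun u => Real.iSup_nonneg fun v => Real.iSup_nonneg fun v' =>
    div_nonneg (hA u v') (hA v v')

theorem le_maxLikelihoodRatio_mul [Finite V] [Finite V'] {v : V} {v' : V'} (hA : 0 < A v v')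
    (u : V) : A u v' ≤ maxLikelihoodRatio A * A v v' := by
  rw [← div_le_iff₀ hA]
  exact le_ciSup₃_of_finite (fun u v v' => A u v' / A v v') u v v'

end maxLikelihoodRatio

theorem prod_le_prod_maxLikelihoodRatio_mul {𝒜 : Type*} [Fintype 𝒜] {V V' : 𝒜 → Type*}
    [∀ a, Finite (V a)] [∀ a, Finite (V' a)] (A : ∀ a, V a → V' a → ℝ)
    (hA : ∀ a u v', 0 < A a u v') (u v : ∀ a, V a) (v' : ∀ a, V' a) :
    ∏ a, A a (u a) (v' a) ≤ (∏ a, maxLikelihoodRatio (A a)) * ∏ a, A a (v a) (v' a) := by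
  rw [← prod_mul_distrib]
  exact prod_le_prod (fun a _ => (hA a _ _).le) fun a _ => le_maxLikelihoodRatio_mul (hA a _ _) _

theorem prod_le_mul_prod_of_eq_off {R : Type*} [Fintype R] {f g : R → ℝ} {r : R} {c : ℝ}
    (hg : ∀ s, 0 ≤ g s) (hfg : ∀ s, s ≠ r → f s = g s) (hr : f r ≤ c * g r) :
    ∏ s, f s ≤ c * ∏ s, g s := by
  classical
  have hrest : ∏ s ∈ univ.erase r, f s = ∏ s ∈ univ.erase r, g s :=
    prod_congr rfl fun s hs => hfg s (ne_of_mem_erase hs)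
  rw [← mul_prod_erase univ f (mem_univ r), ← mul_prod_erase univ g (mem_univ r), hrest,
    ← mul_assoc]
  exact mul_le_mul_of_nonneg_right hr (prod_nonneg fun s _ => hg s)

theorem stmt9_general {R : Type*} [Fintype R] [DecidableEq R]
    {𝒜 : Type*} [Fintype 𝒜]
    (V V' : 𝒜 → Type*) [∀ a, Fintype (V a)]
    [∀ a, Fintype (V' a)]
    (A : ∀ a, V a → V' a → ℝ) (hA : ∀ a u v', 0 < A a u v')
    (τ₁ τ₂ : R → ∀ a, V a) (r : R) (hdiff : ∀ s, s ≠ r → τ₁ s = τ₂ s)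
    (τ' : R → ∀ a, V' a) :
    (∑ π : Equiv.Perm R, ∏ s, ∏ a, A a (τ₁ s a) (τ' (π s) a)) /
        (Nat.factorial (Fintype.card R))
      ≤ Real.exp (∑ a, Real.log
            (⨆ u : V a, ⨆ v : V a, ⨆ v' : V' a, A a u v' / A a v v')) *
        ((∑ π : Equiv.Perm R, ∏ s, ∏ a, A a (τ₂ s a) (τ' (π s) a)) /
          (Nat.factorial (Fintype.card R))) := by
  set M := ∏ a, maxLikelihoodRatio (A a)
  have hM : M ≤ Real.exp (∑ a, Real.log (maxLikelihoodRatio (A a))) := by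
    rw [Real.exp_sum]
    exact prod_le_prod (fun a _ => maxLikelihoodRatio_nonneg fun u v' => (hA a u v').le)
      fun a _ => Real.le_exp_log _
  have hperm (π : Equiv.Perm R) :
      ∏ s, ∏ a, A a (τ₁ s a) (τ' (π s) a) ≤ M * ∏ s, ∏ a, A a (τ₂ s a) (τ' (π s) a) :=
    prod_le_mul_prod_of_eq_off (fun s => prod_nonneg fun a _ => (hA a _ _).le)
      (fun s hs => by rw [hdiff s hs]) (prod_le_prod_maxLikelihoodRatio_mul A hA _ _ _)
  have hsum_nonneg : 0 ≤ ∑ π : Equiv.Perm R, ∏ s, ∏ a, A a (τ₂ s a) (τ' (π s) a) :=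
    sum_nonneg fun π _ => prod_nonneg fun s _ => prod_nonneg fun a _ => (hA a _ _).le
  rw [← mul_div_assoc]
  gcongr
  calc ∑ π : Equiv.Perm R, ∏ s, ∏ a, A a (τ₁ s a) (τ' (π s) a)
      ≤ M * ∑ π : Equiv.Perm R, ∏ s, ∏ a, A a (τ₂ s a) (τ' (π s) a) := by
        rw [mul_sum]; exact sum_le_sum fun π _ => hperm π
    _ ≤ _ := mul_le_mul_of_nonneg_right hM hsum_nonneg

/-- a multi-attribute PRAM mechanism with independent strictly positive
row-stochastic per-attribute matrices `A a` gives ε-DP with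
`ε = Σ_a ln max_{u,v,v'} (A a) u v' / (A a) v v'`. -/
theorem stmt9 {R : Type*} [Fintype R] [DecidableEq R]
    {𝒜 : Type*} [Fintype 𝒜] [DecidableEq 𝒜]
    (V V' : 𝒜 → Type*) [∀ a, Fintype (V a)] [∀ a, Nonempty (V a)]
    [∀ a, Fintype (V' a)] [∀ a, Nonempty (V' a)]
    (A : ∀ a, V a → V' a → ℝ) (hA : ∀ a u v', 0 < A a u v')
    (hrow : ∀ a u, ∑ v', A a u v' = 1)
    (τ₁ τ₂ : R → ∀ a, V a) (r : R) (hdiff : ∀ s, s ≠ r → τ₁ s = τ₂ s)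
    (τ' : R → ∀ a, V' a) :
    (∑ π : Equiv.Perm R, ∏ s, ∏ a, A a (τ₁ s a) (τ' (π s) a)) /
        (Nat.factorial (Fintype.card R))
      ≤ Real.exp (∑ a, Real.log
            (⨆ u : V a, ⨆ v : V a, ⨆ v' : V' a, A a u v' / A a v v')) *
        ((∑ π : Equiv.Perm R, ∏ s, ∏ a, A a (τ₂ s a) (τ' (π s) a)) /
          (Nat.factorial (Fintype.card R))) :=
  stmt9_general V V' A hA τ₁ τ₂ r hdiff τ'
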